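/- Let ν = p·ν₁ + (1-p)·ν₀ be a mixture of probability measures on ℝ with p ∈ (0,1] and continuous CDF F, and let G'(y) = max{0, (F(y)-(1-p))/p}. Then G' is a CDF and G'(y) ≤ F₁(y) for all y, where F₁ is the CDF of ν₁; consequently, if ν₁ has finite mean, ∫ y dG'(y) ≥ ∫ y dF₁(y). -/

import Mathlib

open MeasureTheory Filter Topology

/-- The CDF of a measure on `ℝ`. -/
noncomputable def cdfOf (ν : Measure ℝ) (y : ℝ) : ℝ := (ν (Set.Iic y)).toReal

/-!
Write `F = p F₁ + (1 - p) F₀`. Since `F₀ ≤ 1`, `F - (1 - p) ≤ p F₁`, which is `G' ≤ F₁`.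
As `F` is continuous, the tail `{F ≥ 1 - p}` is a half-line `[t, ∞)` with `F t = 1 - p` and
no atom at `t`, so the restriction of `ν` to it has CDF `(F - (1 - p))⁺ = p G'` and mass `p`.
It therefore stochastically dominates `p ν₁`, and by the layer-cake formula its mean
`∫_{F ≥ 1 - p} y dν` is at least `p ∫ y dν₁`.
-/

open Set ProbabilityTheory

section Layercake

variable {α : Type*} [MeasurableSpace α]

lemma lintegral_ofReal_eq_lintegral_meas_lt' (μ : Measure α) {f : α → ℝ}
    (hf : AEMeasurable f μ) :
    ∫⁻ a, ENNReal.ofReal (f a) ∂μ = ∫⁻ t in Ioi 0, μ {a | t < f a} := by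
  have hpos := lintegral_eq_lintegral_meas_lt μ (ae_of_all _ fun a => le_max_right (f a) 0)
    (hf.max aemeasurable_const)
  simp only [ENNReal.ofReal_max, ENNReal.ofReal_zero, max_eq_left, zero_le] at hpos
  rw [hpos]
  refine setLIntegral_congr_fun measurableSet_Ioi fun t (ht : 0 < t) => ?_
  simp only [lt_max_iff, ht.not_gt, or_false]

lemma lintegral_ofReal_eq_lintegral_meas_le' (μ : Measure α) {f : α → ℝ}
    (hf : AEMeasurable f μ) :
    ∫⁻ a, ENNReal.ofReal (f a) ∂μ = ∫⁻ t in Ioi 0, μ {a | t ≤ f a} := by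
  have hpos := lintegral_eq_lintegral_meas_le μ (ae_of_all _ fun a => le_max_right (f a) 0)
    (hf.max aemeasurable_const)
  simp only [ENNReal.ofReal_max, ENNReal.ofReal_zero, max_eq_left, zero_le] at hpos
  rw [hpos]
  refine setLIntegral_congr_fun measurableSet_Ioi fun t (ht : 0 < t) => ?_
  simp only [le_max_iff, ht.not_ge, or_false]

end Layercake

lemma cdfOf_eq_cdf (ν : Measure ℝ) [IsProbabilityMeasure ν] : cdfOf ν = cdf ν :=
  funext fun y => (cdf_eq_real ν y).symm

lemma monotone_cdfOf (μ : Measure ℝ) [IsFiniteMeasure μ] : Monotone (cdfOf μ) :=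
  fun _ _ hxy => measureReal_mono (Iic_subset_Iic.2 hxy)

lemma tendsto_cdfOf_atTop (μ : Measure ℝ) [IsFiniteMeasure μ] :
    Tendsto (cdfOf μ) atTop (𝓝 (μ.real univ)) :=
  (ENNReal.tendsto_toReal (measure_ne_top μ univ)).comp (tendsto_measure_Iic_atTop μ)

lemma tendsto_cdfOf_atTop_one (ν : Measure ℝ) [IsProbabilityMeasure ν] :
    Tendsto (cdfOf ν) atTop (𝓝 1) :=
  cdfOf_eq_cdf ν ▸ tendsto_cdf_atTop ν

lemma tendsto_cdfOf_atBot (ν : Measure ℝ) [IsProbabilityMeasure ν] :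
    Tendsto (cdfOf ν) atBot (𝓝 0) :=
  cdfOf_eq_cdf ν ▸ tendsto_cdf_atBot ν

lemma cdfOf_smul_add_smul (μ ν : Measure ℝ) [IsFiniteMeasure μ] [IsFiniteMeasure ν] {a b : ℝ}
    (ha : 0 ≤ a) (hb : 0 ≤ b) (y : ℝ) :
    cdfOf (ENNReal.ofReal a • μ + ENNReal.ofReal b • ν) y = a * cdfOf μ y + b * cdfOf ν y := by
  simp [cdfOf, ENNReal.toReal_add, ENNReal.mul_ne_top, ENNReal.toReal_mul, ha, hb]

lemma cdfOf_smul (μ : Measure ℝ) (c : ENNReal) (y : ℝ) :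
    cdfOf (c • μ) y = c.toReal * cdfOf μ y := by
  simp [cdfOf, ENNReal.toReal_mul]

lemma lintegral_ofReal_eq_lintegral_measure_Ioi (μ : Measure ℝ) :
    ∫⁻ y, ENNReal.ofReal y ∂μ = ∫⁻ t in Ioi 0, μ (Ioi t) :=
  lintegral_ofReal_eq_lintegral_meas_lt' μ aemeasurable_id

lemma lintegral_ofReal_neg_eq_lintegral_measure_Iic (μ : Measure ℝ) :
    ∫⁻ y, ENNReal.ofReal (-y) ∂μ = ∫⁻ t in Ioi 0, μ (Iic (-t)) := by
  simp only [lintegral_ofReal_eq_lintegral_meas_le' μ measurable_neg.aemeasurable, le_neg, Iic_def]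

/-- The positive and negative parts of the mean are the integrals of the tails `μ (Ioi t)` and
`μ (Iic (-t))` over `t > 0`, and both compare the right way. -/
lemma integral_id_le_of_cdfOf_le (μ σ : Measure ℝ) [IsFiniteMeasure μ] [IsFiniteMeasure σ]
    (hμ : Integrable id μ) (hσ : Integrable id σ) (hmass : μ.real univ = σ.real univ)
    (hcdf : ∀ u, cdfOf μ u ≤ cdfOf σ u) :
    ∫ y, y ∂σ ≤ ∫ y, y ∂μ := by
  have hIic (u : ℝ) : μ (Iic u) ≤ σ (Iic u) :=
    (ENNReal.toReal_le_toReal (measure_ne_top _ _) (measure_ne_top _ _)).1 (hcdf u)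
  have hIoi (u : ℝ) : σ (Ioi u) ≤ μ (Ioi u) := by
    refine (ENNReal.toReal_le_toReal (measure_ne_top _ _) (measure_ne_top _ _)).1 ?_
    simp only [← measureReal_def, ← compl_Iic, measureReal_compl measurableSet_Iic, hmass]
    exact sub_le_sub_left (hcdf u) _
  have hpos : ∫⁻ y, ENNReal.ofReal y ∂σ ≤ ∫⁻ y, ENNReal.ofReal y ∂μ := by
    simp only [lintegral_ofReal_eq_lintegral_measure_Ioi]
    exact lintegral_mono fun t => hIoi t
  have hneg : ∫⁻ y, ENNReal.ofReal (-y) ∂μ ≤ ∫⁻ y, ENNReal.ofReal (-y) ∂σ := by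
    simp only [lintegral_ofReal_neg_eq_lintegral_measure_Iic]
    exact lintegral_mono fun t => hIic (-t)
  rw [integral_eq_lintegral_pos_part_sub_lintegral_neg_part (f := fun y => y) hμ,
    integral_eq_lintegral_pos_part_sub_lintegral_neg_part (f := fun y => y) hσ]
  have := ENNReal.toReal_mono (Integrable.lintegral_lt_top (f := fun y => y) hμ).ne hpos
  have := ENNReal.toReal_mono (Integrable.lintegral_lt_top (f := fun y => -y) hσ.neg).ne hneg
  linarith

lemma exists_eq_and_setOf_le_eq_Ici {f : ℝ → ℝ} (hf : Continuous f) (hmono : Monotone f)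
    {a b c : ℝ} (ha : f a < c) (hb : c ≤ f b) :
    ∃ t, f t = c ∧ {y | c ≤ f y} = Ici t := by
  set A := {y | c ≤ f y}
  have hlow : a ∈ lowerBounds A := fun y hy =>
    le_of_not_gt fun hya => ((hmono hya.le).trans_lt ha).not_ge hy
  have hmem : sInf A ∈ A := (isClosed_le continuous_const hf).csInf_mem ⟨b, hb⟩ ⟨a, hlow⟩
  refine ⟨sInf A, ?_, Set.ext fun y => ⟨fun hy => csInf_le ⟨a, hlow⟩ hy,
    fun hy => hmem.trans (hmono hy)⟩⟩
  obtain ⟨s, hs, hfs⟩ := intermediate_value_Icc (hlow hmem) hf.continuousOn ⟨ha.le, hmem⟩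
  have : sInf A ≤ s := csInf_le ⟨a, hlow⟩ hfs.ge
  rwa [le_antisymm hs.2 this] at hfs

lemma cdfOf_restrict_setOf_le_cdfOf (ν : Measure ℝ) [IsProbabilityMeasure ν]
    (hcont : Continuous (cdfOf ν)) {c : ℝ} (hc0 : 0 ≤ c) (hc1 : c < 1) (u : ℝ) :
    cdfOf (ν.restrict {y | c ≤ cdfOf ν y}) u = max (cdfOf ν u - c) 0 := by
  rcases hc0.eq_or_lt with rfl | hc0
  · have : {y | 0 ≤ cdfOf ν y} = univ := eq_univ_of_forall fun y => ENNReal.toReal_nonneg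
    rw [this, Measure.restrict_univ, sub_zero]
    exact (max_eq_left ENNReal.toReal_nonneg).symm
  obtain ⟨a, ha⟩ := ((tendsto_cdfOf_atBot ν).eventually (eventually_lt_nhds hc0)).exists
  obtain ⟨b, hb⟩ := ((tendsto_cdfOf_atTop_one ν).eventually (eventually_ge_nhds hc1)).exists
  obtain ⟨t, hFt, hA⟩ := exists_eq_and_setOf_le_eq_Ici hcont (monotone_cdfOf ν) ha hb
  rw [cdfOf_eq_cdf] at hcont hFt
  rw [hA, cdfOf_eq_cdf ν, cdfOf, Measure.restrict_apply measurableSet_Iic, Iic_inter_Ici,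
    ← measure_cdf ν, StieltjesFunction.measure_Icc, hcont.continuousWithinAt.leftLim_eq, hFt, ENNReal.toReal_ofReal', measure_cdf]

noncomputable def upperTrim (p x : ℝ) : ℝ := max 0 ((x - (1 - p)) / p)

lemma monotone_upperTrim {p : ℝ} (hp : 0 ≤ p) : Monotone (upperTrim p) := fun _ _ hxy =>
  max_le_max le_rfl (div_le_div_of_nonneg_right (sub_le_sub_right hxy _) hp)

lemma continuous_upperTrim (p : ℝ) : Continuous (upperTrim p) :=
  continuous_const.max ((continuous_id.sub continuous_const).div_const p)

lemma upperTrim_zero {p : ℝ} (hp0 : 0 ≤ p) (hp1 : p ≤ 1) : upperTrim p 0 = 0 :=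
  max_eq_left (div_nonpos_of_nonpos_of_nonneg (by linarith) hp0)

lemma upperTrim_one {p : ℝ} (hp : p ≠ 0) : upperTrim p 1 = 1 := by
  simp [upperTrim, hp]

lemma mul_upperTrim {p : ℝ} (hp : 0 < p) (x : ℝ) :
    p * upperTrim p x = max (x - (1 - p)) 0 := by
  rw [upperTrim, mul_max_of_nonneg _ _ hp.le, mul_zero, mul_div_cancel₀ _ hp.ne', max_comm]

lemma upperTrim_mixture_le {p a b : ℝ} (hp0 : 0 < p) (hp1 : p ≤ 1) (ha : 0 ≤ a) (hb : b ≤ 1) :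
    upperTrim p (p * a + (1 - p) * b) ≤ a := by
  refine max_le ha ((div_le_iff₀ hp0).2 ?_)
  nlinarith

/-- Upper-tail trimming: `G'(y) = max{0, (F(y)-(1-p))/p}` is a CDF lying below the
component CDF `F₁` pointwise; consequently its mean — the mean of `ν` conditional on
exceeding its `(1-p)`-quantile, `(1/p)·∫_{{y | 1-p ≤ F y}} y dν` — is at least the
component mean `∫ y dF₁`. -/
theorem stmt_16 (ν ν0 ν1 : Measure ℝ) [IsProbabilityMeasure ν] [IsProbabilityMeasure ν0]
    [IsProbabilityMeasure ν1] (p : ℝ) (hp : p ∈ Set.Ioc (0 : ℝ) 1)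
    (hmix : ν = ENNReal.ofReal p • ν1 + ENNReal.ofReal (1 - p) • ν0)
    (hcont : Continuous (cdfOf ν))
    (hint : Integrable id ν) (hint1 : Integrable id ν1) :
    (Monotone fun y => max 0 ((cdfOf ν y - (1 - p)) / p)) ∧
    Continuous (fun y => max 0 ((cdfOf ν y - (1 - p)) / p)) ∧
    Tendsto (fun y => max 0 ((cdfOf ν y - (1 - p)) / p)) atBot (𝓝 0) ∧
    Tendsto (fun y => max 0 ((cdfOf ν y - (1 - p)) / p)) atTop (𝓝 1) ∧
    (∀ y, max 0 ((cdfOf ν y - (1 - p)) / p) ≤ cdfOf ν1 y) ∧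
    ∫ y, y ∂ν1 ≤ (1 / p) * ∫ y in {y : ℝ | 1 - p ≤ cdfOf ν y}, y ∂ν := by
  obtain ⟨hp0, hp1⟩ := hp
  set G : ℝ → ℝ := upperTrim p ∘ cdfOf ν
  have hF (y : ℝ) : cdfOf ν y = p * cdfOf ν1 y + (1 - p) * cdfOf ν0 y := by
    rw [hmix, cdfOf_smul_add_smul ν1 ν0 hp0.le (sub_nonneg.2 hp1)]
  have hGtop : Tendsto G atTop (𝓝 1) := by
    simpa only [upperTrim_one hp0.ne'] using
      ((continuous_upperTrim p).tendsto 1).comp (tendsto_cdfOf_atTop_one ν)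
  have hGbot : Tendsto G atBot (𝓝 0) := by
    simpa only [upperTrim_zero hp0.le hp1] using
      ((continuous_upperTrim p).tendsto 0).comp (tendsto_cdfOf_atBot ν)
  have hGle (y : ℝ) : G y ≤ cdfOf ν1 y := by
    simp only [G, Function.comp_apply, hF y]
    exact upperTrim_mixture_le hp0 hp1 ENNReal.toReal_nonneg (ENNReal.toReal_le_of_le_ofReal
      zero_le_one (by simpa using prob_le_one))
  refine ⟨(monotone_upperTrim hp0.le).comp (monotone_cdfOf ν),
    (continuous_upperTrim p).comp hcont, hGbot, hGtop, hGle, ?_⟩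
  set μ := ν.restrict {y | 1 - p ≤ cdfOf ν y}
  have hμ (u : ℝ) : cdfOf μ u = p * G u :=
    (cdfOf_restrict_setOf_le_cdfOf ν hcont (sub_nonneg.2 hp1) (by linarith) u).trans
      (mul_upperTrim hp0 _).symm
  have hmass : μ.real univ = p := tendsto_nhds_unique (tendsto_cdfOf_atTop μ)
    (by simpa using (hGtop.const_mul p).congr fun u => (hμ u).symm)
  have hσ (u : ℝ) : cdfOf (ENNReal.ofReal p • ν1) u = p * cdfOf ν1 u := by
    rw [cdfOf_smul, ENNReal.toReal_ofReal hp0.le]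
  have := ν1.smul_finite (ENNReal.ofReal_ne_top (r := p))
  have key := integral_id_le_of_cdfOf_le μ (ENNReal.ofReal p • ν1) hint.restrict
    (hint1.smul_measure ENNReal.ofReal_ne_top) (by simp [hmass, hp0.le])
    (fun u => by rw [hμ, hσ]; exact mul_le_mul_of_nonneg_left (hGle u) hp0.le)
  rw [integral_smul_measure, ENNReal.toReal_ofReal hp0.le, smul_eq_mul] at key
  rwa [one_div, le_inv_mul_iff₀ hp0]
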